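/- Let A = (Q, Σ̃, Γ, ⊥, q0, δ, F) be a visibly pushdown automaton, and fix linear orders on Q and Γ. With ν_A, σ0, σ1 defined via length-lexicographically minimal representative configurations, the languages S0 = σ0(D) ⊆ Q* and S1 = σ1(W∖{ε}) ⊆ (Q^Q ∪ Q)* are context-free. -/

import Mathlib

/-! Common definitions for sliding-window / visibly pushdown formalizations. -/

/-- `γ` grows polynomially: `γ(n) ∈ O(n^k)` for some `k`. -/
def GrowsPolynomially (γ : ℕ → ℕ) : Prop :=
  ∃ k C : ℕ, ∀ n : ℕ, γ n ≤ C * (n + 1) ^ k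

/-- `γ` grows exponentially: there is `c > 1` with `γ(n) ≥ c^n` for infinitely many `n`. -/
def GrowsExponentially (γ : ℕ → ℕ) : Prop :=
  ∃ c : ℝ, 1 < c ∧ ∀ m : ℕ, ∃ n : ℕ, m ≤ n ∧ c ^ n ≤ (γ n : ℝ)

/-- A set of words is suffix-closed. -/
def SuffixClosed {α : Type} (X : Set (List α)) : Prop :=
  ∀ x ∈ X, ∀ s : List α, s <:+ x → s ∈ X

/-- Domain of a partial function presented with `Option`. -/
def pdom {α β : Type} (t : List α → Option β) : Set (List α) := {x | t x ≠ none}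

/-- The `t`-growth of `X`: the number of values of `t` on words of `X` of length at most `n`. -/
noncomputable def growthOf {α : Type} {Y : Type} (t : List α → Y) (X : Set (List α)) (n : ℕ) : ℕ :=
  (t '' {x | x ∈ X ∧ x.length ≤ n}).ncard

/-- Growth of a language: number of its words of length at most `n`. -/
noncomputable def langGrowth {β : Type} (L : Set (List β)) (n : ℕ) : ℕ :=
  {y | y ∈ L ∧ y.length ≤ n}.ncard

/-- Suffix expansion of a (total or partial) function: the tuple of values on all
nonempty suffixes `a₁⋯aₙ, a₂⋯aₙ, …, aₙ` of the input. -/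
def cev {α : Type} {Y : Type} (t : List α → Y) (x : List α) : List Y :=
  x.tails.dropLast.map t

/-- Image of `X` under the partial function `t`. -/
def optImage {α β : Type} (t : List α → Option β) (X : Set (List α)) : Set β :=
  {y | ∃ x ∈ X, t x = some y}

/-- A language is bounded if it is contained in `w₁* w₂* ⋯ w_k*`. -/
def BoundedLang {β : Type} (L : Set (List β)) : Prop :=
  ∃ ws : List (List β), ∀ x ∈ L, ∃ ms : List ℕ, ms.length = ws.length ∧
    x = (List.zipWith (fun (w : List β) (m : ℕ) => (List.replicate m w).flatten) ws ms).flatten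

/-- `{u,v}*`: all concatenations of copies of `u` and `v`. -/
def UVStar {α : Type} (u v : List α) : Set (List α) :=
  {w | ∃ l : List (List α), (∀ p ∈ l, p = u ∨ p = v) ∧ w = l.flatten}

/-- `{u,v}^{≤ n}`: concatenations of at most `n` words, each equal to `u` or `v`. -/
def UVPow {α : Type} (u v : List α) (n : ℕ) : Set (List α) :=
  {w | ∃ l : List (List α), (∀ p ∈ l, p = u ∨ p = v) ∧ l.length ≤ n ∧ w = l.flatten}

/-- The set `{u₂,v₂}{u,v}* Z`. -/
def FoolingSet {α : Type} (u₂ v₂ u v : List α) (Z : Set (List α)) : Set (List α) :=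
  {x | ∃ a w z, (a = u₂ ∨ a = v₂) ∧ w ∈ UVStar u v ∧ z ∈ Z ∧ x = a ++ (w ++ z)}

/-- Linear fooling scheme for a partial function `t`. -/
def IsLinearFoolingScheme {α Y : Type} (t : List α → Option Y)
    (u₂ v₂ u v : List α) (Z : Set (List α)) : Prop :=
  u₂ <:+ u ∧ v₂ <:+ v ∧ u₂.length = v₂.length ∧
  FoolingSet u₂ v₂ u v Z ⊆ pdom t ∧
  ∃ C : ℕ, ∀ n : ℕ, ∃ z ∈ Z, z.length ≤ C * (n + 1) ∧
    ∀ w ∈ UVPow u v n, t (u₂ ++ (w ++ z)) ≠ t (v₂ ++ (w ++ z))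

/-- `X` contains a linear fooling set for `t`. -/
def ContainsLinearFoolingSet {α Y : Type} (t : List α → Option Y) (X : Set (List α)) : Prop :=
  ∃ u₂ v₂ u v Z, IsLinearFoolingScheme t u₂ v₂ u v Z ∧ FoolingSet u₂ v₂ u v Z ⊆ X

/-! ### Transducers and rational functions -/

/-- A finite-state transducer over `(α, β)` with terminal output function. -/
structure Transducer (α β : Type) where
  Q : Type
  finQ : Fintype Q
  I : Set Q
  F : Set Q
  Δ : Set (Q × List α × List β × Q)
  finΔ : Δ.Finite
  o : Q → List β

namespace Transducer

variable {α β : Type}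

/-- A run from `p` to `r` with input `x` and output `y`. -/
inductive Run (A : Transducer α β) : A.Q → List α → List β → A.Q → Prop
  | nil (q : A.Q) : Run A q [] [] q
  | cons {p q r : A.Q} {x₁ x : List α} {y₁ y : List β} :
      (p, x₁, y₁, q) ∈ A.Δ → Run A q x y r → Run A p (x₁ ++ x) (y₁ ++ y) r

/-- The transduction defined by a transducer. -/
def T (A : Transducer α β) : Set (List α × List β) :=
  {p | ∃ q₀ q y, q₀ ∈ A.I ∧ q ∈ A.F ∧ A.Run q₀ p.1 y q ∧ p.2 = y ++ A.o q}

end Transducer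

/-- A partial function is rational if its graph is the transduction of some transducer. -/
def IsRationalFun {α β : Type} (t : List α → Option (List β)) : Prop :=
  ∃ A : Transducer α β, ∀ x y, t x = some y ↔ (x, y) ∈ A.T

/-! ### Right congruences, suffix expansions, critical tuples -/

/-- A right congruence: an equivalence relation compatible with appending on the right. -/
def IsRightCongruence {α : Type} (r : List α → List α → Prop) : Prop :=
  Equivalence r ∧ ∀ x y z : List α, r x y → r (x ++ z) (y ++ z)

/-- Suffix expansion of a relation: words of the same length whose corresponding
nonempty suffixes are all related. -/
def SuffixExpansion {α : Type} (r : List α → List α → Prop) (x y : List α) : Prop :=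
  x.length = y.length ∧ ∀ i < x.length, r (x.drop i) (y.drop i)

/-- Number of `r`-classes of words of length at most `n`. -/
noncomputable def classCount {α : Type} (r : List α → List α → Prop) (n : ℕ) : ℕ :=
  Set.ncard {C : Set (List α) | ∃ x : List α, x.length ≤ n ∧ C = {y | r x y}}

/-- A relation has finite index if it has finitely many classes. -/
def FiniteIndex {α : Type} (r : List α → List α → Prop) : Prop :=
  Set.Finite {C : Set (List α) | ∃ x : List α, C = {y | r x y}}

/-- Critical tuple in a right congruence. -/
def IsCriticalTuple {α : Type} (r : List α → List α → Prop) (u₂ v₂ u v : List α) : Prop :=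
  1 ≤ u₂.length ∧ u₂.length = v₂.length ∧ u₂ <:+ u ∧ v₂ <:+ v ∧
  ∀ w ∈ UVStar u v, ¬ r (u₂ ++ w) (v₂ ++ w)

/-- The Myhill–Nerode right congruence of a language. -/
def MNrel {α : Type} (L : Set (List α)) (x y : List α) : Prop :=
  ∀ z : List α, x ++ z ∈ L ↔ y ++ z ∈ L

/-! ### Suffix distance and the canonical right congruence of a rational function -/

/-- Longest common prefix. -/
def cpre {β : Type} [DecidableEq β] : List β → List β → List β
  | a :: x, b :: y => if a = b then a :: cpre x y else []
  | _, _ => []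

/-- `‖x,y‖ = |x| + |y| − 2|x ∧ y|`, where `x ∧ y` is the longest common suffix. -/
def suffDist {β : Type} [DecidableEq β] (x y : List β) : ℕ :=
  x.length + y.length - 2 * (cpre x.reverse y.reverse).length

/-- Value of a partial function (defaulting to the empty word off the domain). -/
def pval {α β : Type} (t : List α → Option (List β)) (x : List α) : List β :=
  (t x).getD []

/-- The right congruence `R_t` of Reutenauer–Schützenberger. -/
def Rt {α β : Type} [DecidableEq β] (t : List α → Option (List β)) (u v : List α) : Prop :=
  (∀ z : List α, u ++ z ∈ pdom t ↔ v ++ z ∈ pdom t) ∧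
  Set.Finite {d : ℕ | ∃ w : List α, u ++ w ∈ pdom t ∧ v ++ w ∈ pdom t ∧
      d = suffDist (pval t (u ++ w)) (pval t (v ++ w))}

/-- Two partial functions are adjacent. -/
def Adjacent {α β : Type} [DecidableEq β] (t₁ t₂ : List α → Option (List β)) : Prop :=
  Set.Finite {d : ℕ | ∃ w : List α, w ∈ pdom t₁ ∧ w ∈ pdom t₂ ∧
      d = suffDist (pval t₁ w) (pval t₂ w)}

/-! ### Visibly pushdown automata -/

/-- Kinds of letters of a pushdown alphabet. -/
inductive VPKind : Type
  | call : VPKind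
  | ret : VPKind
  | intern : VPKind
deriving DecidableEq

/-- A visibly pushdown automaton over the pushdown alphabet determined by `pa`.
The bottom-of-stack symbol `⊥` is represented implicitly by the empty stack. -/
structure VPA (α : Type) (pa : α → VPKind) where
  Q : Type
  finQ : Fintype Q
  Γ : Type
  finΓ : Fintype Γ
  q₀ : Q
  F : Set Q
  δc : Q → α → Γ × Q
  δr : Q → α → Option Γ → Q
  δi : Q → α → Q

namespace VPA

variable {α : Type} {pa : α → VPKind}

/-- One step of the VPA on a configuration (stack with top at the head, state). -/
def step (A : VPA α pa) (c : List A.Γ × A.Q) (a : α) : List A.Γ × A.Q :=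
  match pa a with
  | VPKind.call => ((A.δc c.2 a).1 :: c.1, (A.δc c.2 a).2)
  | VPKind.intern => (c.1, A.δi c.2 a)
  | VPKind.ret =>
    match c.1 with
    | [] => ([], A.δr c.2 a none)
    | γ :: st => (st, A.δr c.2 a (some γ))

/-- Extended transition function on words. -/
def run (A : VPA α pa) (c : List A.Γ × A.Q) (w : List α) : List A.Γ × A.Q :=
  w.foldl A.step c

/-- The language accepted by a VPA (from the initial configuration `⊥q₀`). -/
def acceptsLang (A : VPA α pa) : Set (List α) :=
  {w | (A.run ([], A.q₀) w).2 ∈ A.F}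

/-- Language accepted from a configuration. -/
def AccLang (A : VPA α pa) (c : List A.Γ × A.Q) : Set (List α) :=
  {w | (A.run c w).2 ∈ A.F}

/-- The reachable configurations. -/
def rConf (A : VPA α pa) : Set (List A.Γ × A.Q) :=
  Set.range (fun w => A.run ([], A.q₀) w)

end VPA

/-- A language is a visibly pushdown language over the pushdown alphabet `pa`. -/
def IsVPL {α : Type} (pa : α → VPKind) (L : Set (List α)) : Prop :=
  ∃ A : VPA α pa, L = A.acceptsLang

/-- Well-matched words over a pushdown alphabet. -/
inductive WellMatched {α : Type} (pa : α → VPKind) : List α → Prop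
  | nil : WellMatched pa []
  | intern (a : α) : pa a = VPKind.intern → WellMatched pa [a]
  | append {u v : List α} : WellMatched pa u → WellMatched pa v → WellMatched pa (u ++ v)
  | wrap {w : List α} {a b : α} : WellMatched pa w → pa a = VPKind.call → pa b = VPKind.ret →
      WellMatched pa (a :: (w ++ [b]))

/-- Descending words: concatenations of well-matched words and return letters. -/
def Descending {α : Type} (pa : α → VPKind) (w : List α) : Prop :=
  ∃ l : List (List α),
    (∀ p ∈ l, WellMatched pa p ∨ ∃ b : α, pa b = VPKind.ret ∧ p = [b]) ∧ w = l.flatten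

/-- Length-lexicographic order on configurations `⊥αq` (stacks compared bottom-first). -/
def ConfLe {Q Γ : Type} (ltQ : LinearOrder Q) (ltΓ : LinearOrder Γ)
    (c d : List Γ × Q) : Prop :=
  c.1.length < d.1.length ∨
    (c.1.length = d.1.length ∧
      (List.Lex ltΓ.lt c.1.reverse d.1.reverse ∨ (c.1 = d.1 ∧ ltQ.le c.2 d.2)))

/-- `rep` chooses from each equivalence class of reachable configurations the
length-lexicographically least representative. -/
def IsRepFun {α : Type} {pa : α → VPKind} (A : VPA α pa)
    (ltQ : LinearOrder A.Q) (ltΓ : LinearOrder A.Γ)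
    (rep : List A.Γ × A.Q → List A.Γ × A.Q) : Prop :=
  ∀ c ∈ A.rConf, rep c ∈ A.rConf ∧ A.AccLang (rep c) = A.AccLang c ∧
    ∀ c' ∈ A.rConf, A.AccLang c' = A.AccLang c → ConfLe ltQ ltΓ (rep c) c'

/-- `ν_A(w)`: the representative of the configuration reached on `w`. -/
def nuA {α : Type} {pa : α → VPKind} (A : VPA α pa)
    (rep : List A.Γ × A.Q → List A.Γ × A.Q) (w : List α) : List A.Γ × A.Q :=
  rep (A.run ([], A.q₀) w)

/-- `σ₀(w)`: the states representing the Myhill–Nerode classes of the nonempty suffixes. -/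
def sigma0 {α : Type} {pa : α → VPKind} (A : VPA α pa)
    (rep : List A.Γ × A.Q → List A.Γ × A.Q) (w : List α) : List A.Q :=
  w.tails.dropLast.map fun s => (nuA A rep s).2

/-- `φ(w)`: the state transformation of a well-matched word. -/
def phiVPA {α : Type} {pa : α → VPKind} (A : VPA α pa) (w : List α) : A.Q → A.Q :=
  fun p => (A.run ([], p) w).2

/-- `σ₁(w) = φ(w) q₂ ⋯ qₙ`, a word over the alphabet `Q^Q ∪ Q`. -/
def sigma1 {α : Type} {pa : α → VPKind} (A : VPA α pa)
    (rep : List A.Γ × A.Q → List A.Γ × A.Q) (w : List α) : List ((A.Q → A.Q) ⊕ A.Q) :=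
  Sum.inl (phiVPA A w) :: ((sigma0 A rep w).tail.map Sum.inr)

/-! ### Real-time right transducers -/

/-- A real-time right transducer (reads its input from right to left). -/
structure RightTransducer (α β : Type) where
  Q : Type
  finQ : Fintype Q
  F : Set Q
  I : Set Q
  Δ : Set (Q × α × List β × Q)
  finΔ : Δ.Finite
  o : Q → List β

namespace RightTransducer

variable {α β : Type}

/-- Input word of a sequence of transitions. -/
def inputOf {Q : Type} (ts : List (Q × α × List β × Q)) : List α :=
  ts.map fun tr => tr.2.1

/-- Output word of a sequence of transitions. -/
def outputOf {Q : Type} (ts : List (Q × α × List β × Q)) : List β :=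
  (ts.map fun tr => tr.2.2.1).flatten

/-- `IsRunFrom A q ts p`: `ts` is a run on its input from the (rightmost) state `p`
to the (leftmost) state `q`; the transitions are listed left to right. -/
def IsRunFrom (A : RightTransducer α β) : A.Q → List (A.Q × α × List β × A.Q) → A.Q → Prop
  | q, [], p => q = p
  | q, tr :: ts, p => tr ∈ A.Δ ∧ tr.1 = q ∧ IsRunFrom A tr.2.2.2 ts p

/-- There is a run on `w` from `p` (right) to `q` (left). -/
def RunOn (A : RightTransducer α β) (q : A.Q) (w : List α) (p : A.Q) : Prop :=
  ∃ ts, A.IsRunFrom q ts p ∧ inputOf ts = w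

/-- `q ⪯ p`: there is a run from `p` to `q`. -/
def Below (A : RightTransducer α β) (q p : A.Q) : Prop :=
  ∃ w, A.RunOn q w p

/-- The partial function defined by a right transducer. -/
def Defines (A : RightTransducer α β) (t : List α → Option (List β)) : Prop :=
  ∀ x y, t x = some y ↔ ∃ p q ts, p ∈ A.F ∧ q ∈ A.I ∧ A.IsRunFrom p ts q ∧
    inputOf ts = x ∧ y = A.o p ++ outputOf ts

/-- Every state occurs on some initial accepting run. -/
def Trim (A : RightTransducer α β) : Prop :=
  ∀ s : A.Q, ∃ p q ts₁ ts₂, p ∈ A.F ∧ q ∈ A.I ∧ A.IsRunFrom p ts₁ s ∧ A.IsRunFrom s ts₂ q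

/-- Every input word has at most one initial accepting run. -/
def Unambiguous (A : RightTransducer α β) : Prop :=
  ∀ p p' q q' ts ts', p ∈ A.F → p' ∈ A.F → q ∈ A.I → q' ∈ A.I →
    A.IsRunFrom p ts q → A.IsRunFrom p' ts' q' → inputOf ts = inputOf ts' →
    p = p' ∧ ts = ts'

/-- `w` is guarded by `p`: some run on `w` from `p` stays in the SCC of `p`. -/
def Guarded (A : RightTransducer α β) (p : A.Q) (w : List α) : Prop :=
  ∃ q', A.RunOn q' w p ∧ A.Below p q'

/-- The transducer is well-behaved: the terminal outputs of guarded accepting runs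
from the same state on words of equal length coincide. -/
def WellBehaved (A : RightTransducer α β) : Prop :=
  ∀ (p q q' : A.Q) ts ts', q ∈ A.F → q' ∈ A.F →
    A.IsRunFrom q ts p → A.IsRunFrom q' ts' p →
    A.Guarded p (inputOf ts) → A.Guarded p (inputOf ts') →
    (inputOf ts).length = (inputOf ts').length →
    A.o q ++ outputOf ts = A.o q' ++ outputOf ts'

end RightTransducer

/-! ### The Parikh-like map Ψ -/

/-- `Ψ(w)`: each letter of `w` paired with its position counted from the right (1-based). -/
def Psi {α : Type} (w : List α) : Set (α × ℕ) :=
  {p | ∃ i : ℕ, w[i]? = some p.1 ∧ p.2 = w.length - i}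

/-- `Ψ(L) = ⋃_{w ∈ L} Ψ(w)`. -/
def PsiL {α : Type} (L : Set (List α)) : Set (α × ℕ) :=
  ⋃ w ∈ L, Psi w

/-!
Every suffix `s` of a descending word is descending, so `⊥q₀` reaches `⊥ φ(s)(q₀)` on it, and
the letter of `σ₀` at `s` is the state of the representative of this configuration. If `w = uv`
with `u` descending, the letters at the suffixes `s ++ v`, `s` a suffix of `u`, depend on `v` only
through `ρ = φ(v)`: they are read off `⊥ ρ(φ(s)(q₀))`. As `φ(u)` and `ρ` range over the finite
monoid `Q^Q`, the inductive definitions of well-matched and descending words become a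
context-free grammar whose nonterminals carry the pair `(φ(u), ρ)`. For `σ₁`, one more family of
nonterminals generates these words without their first letter, which `σ₁` replaces by `φ(w)`.
-/

namespace ContextFreeGrammar

section SententialLanguage

variable {T N : Type*}

def symbolLanguage (S : N → Language T) : Symbol T N → Language T
  | .terminal t => {[t]}
  | .nonterminal n => S n

def sententialLanguage (S : N → Language T) (u : List (Symbol T N)) : Language T :=
  (u.map (symbolLanguage S)).prod

variable (S : N → Language T)

@[simp]
lemma sententialLanguage_nil : sententialLanguage S [] = 1 := rfl

@[simp]
lemma sententialLanguage_cons (s : Symbol T N) (u : List (Symbol T N)) :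
    sententialLanguage S (s :: u) = symbolLanguage S s * sententialLanguage S u :=
  List.prod_cons

lemma sententialLanguage_append (u v : List (Symbol T N)) :
    sententialLanguage S (u ++ v) = sententialLanguage S u * sententialLanguage S v := by
  simp [sententialLanguage]

lemma sententialLanguage_map_terminal (w : List T) :
    sententialLanguage S (w.map Symbol.terminal) = {w} := by
  induction w with
  | nil => rfl
  | cons a w ih =>
    rw [List.map_cons, sententialLanguage_cons, ih]
    exact Set.image2_singleton

lemma sententialLanguage_le_of_derives {g : ContextFreeGrammar T} (S : g.NT → Language T)
    (hS : ∀ r ∈ g.rules, sententialLanguage S r.output ≤ S r.input)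
    {u v : List (Symbol T g.NT)} (h : g.Derives u v) :
    sententialLanguage S v ≤ sententialLanguage S u := by
  induction h with
  | refl => exact le_rfl
  | tail _ hstep ih =>
    obtain ⟨r, hr, hrw⟩ := hstep
    obtain ⟨p, q, rfl, rfl⟩ := hrw.exists_parts
    refine le_trans ?_ ih
    simp only [sententialLanguage_append, sententialLanguage_cons, sententialLanguage_nil,
      symbolLanguage, mul_one]
    gcongr
    exact hS r hr

theorem language_eq_of_rules_le {g : ContextFreeGrammar T} (S : g.NT → Language T)
    (hS : ∀ r ∈ g.rules, sententialLanguage S r.output ≤ S r.input)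
    (hcomplete : ∀ w ∈ S g.initial,
      g.Derives [Symbol.nonterminal g.initial] (w.map Symbol.terminal)) :
    g.language = S g.initial := by
  refine le_antisymm (fun w hw => ?_) hcomplete
  have := sententialLanguage_le_of_derives S hS hw
  simp only [sententialLanguage_map_terminal, sententialLanguage_cons, sententialLanguage_nil,
    symbolLanguage, mul_one] at this
  exact this rfl

end SententialLanguage

section BoundedRules

variable {T : Type*}

lemma finite_setOf_output_length_le {N : Type*} [Finite T] [Finite N] (k : ℕ) :
    {r : ContextFreeRule T N | r.output.length ≤ k}.Finite := by
  have := Fintype.ofFinite T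
  have := Fintype.ofFinite N
  have := ((Set.finite_univ (α := N)).prod (List.finite_length_le (Symbol T N) k)).image
    fun x => (⟨x.1, x.2⟩ : ContextFreeRule T N)
  exact this.subset fun r hr => ⟨(r.input, r.output), ⟨trivial, hr⟩, rfl⟩

variable {N : Type} [Finite T] [Finite N]

noncomputable def ofBoundedRules (initial : N) (k : ℕ) (P : ContextFreeRule T N → Prop) :
    ContextFreeGrammar T where
  NT := N
  initial := initial
  rules := ((finite_setOf_output_length_le k).subset
    (fun _ hr => hr.1 : {r | r.output.length ≤ k ∧ P r} ⊆ _)).toFinset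

variable {initial : N} {k : ℕ} {P : ContextFreeRule T N → Prop}

lemma mem_ofBoundedRules_rules {r : ContextFreeRule T N} :
    r ∈ (ofBoundedRules initial k P).rules ↔ r.output.length ≤ k ∧ P r :=
  Set.Finite.mem_toFinset _

lemma produces_ofBoundedRules {r : ContextFreeRule T N} (hk : r.output.length ≤ k) (hP : P r) :
    (ofBoundedRules initial k P).Produces [.nonterminal r.input] r.output :=
  ⟨r, mem_ofBoundedRules_rules.2 ⟨hk, hP⟩, ContextFreeRule.Rewrites.input_output⟩

end BoundedRules

end ContextFreeGrammar

lemma List.suffix_append_cases {β : Type*} {s u v : List β} (h : s <:+ u ++ v) :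
    s <:+ v ∨ ∃ s', s' <:+ u ∧ s = s' ++ v := by
  obtain ⟨t, ht⟩ := h
  rcases List.append_eq_append_iff.1 ht with ⟨s', rfl, rfl⟩ | ⟨t', rfl, rfl⟩
  · exact Or.inr ⟨s', List.suffix_append _ _, rfl⟩
  · exact Or.inl (List.suffix_append _ _)

section Words

variable {α : Type} {pa : α → VPKind}

lemma Descending.nil : Descending pa [] := ⟨[], by simp, rfl⟩

lemma WellMatched.descending {w : List α} (h : WellMatched pa w) : Descending pa w :=
  ⟨[w], by simp [h], by simp⟩

lemma Descending.append {u v : List α} (hu : Descending pa u) (hv : Descending pa v) :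
    Descending pa (u ++ v) := by
  obtain ⟨l, hl, rfl⟩ := hu
  obtain ⟨l', hl', rfl⟩ := hv
  exact ⟨l ++ l', fun p hp => (List.mem_append.1 hp).elim (hl p) (hl' p), by simp⟩

lemma Descending.ret_cons {b : α} (hb : pa b = VPKind.ret) {v : List α} (hv : Descending pa v) :
    Descending pa (b :: v) :=
  Descending.append (u := [b]) ⟨[[b]], by simp [hb], by simp⟩ hv

@[elab_as_elim]
lemma Descending.induction {P : List α → Prop} (nil : P [])
    (wellMatched_append : ∀ u v, WellMatched pa u → P v → P (u ++ v))
    (ret_cons : ∀ b v, pa b = VPKind.ret → P v → P (b :: v))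
    {w : List α} (h : Descending pa w) : P w := by
  obtain ⟨l, hl, rfl⟩ := h
  induction l with
  | nil => exact nil
  | cons u l ih =>
    have hP := ih fun p hp => hl p (List.mem_cons_of_mem _ hp)
    rcases hl u List.mem_cons_self with hu | ⟨b, hb, rfl⟩
    · exact wellMatched_append u _ hu hP
    · exact ret_cons b _ hb hP

lemma WellMatched.descending_of_suffix {w s : List α} (h : WellMatched pa w) (hs : s <:+ w) :
    Descending pa s := by
  induction h generalizing s with
  | nil => rw [List.suffix_nil.1 hs]; exact Descending.nil
  | intern a ha =>
    rcases List.suffix_cons_iff.1 hs with rfl | hs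
    · exact (WellMatched.intern a ha).descending
    · rw [List.suffix_nil.1 hs]; exact Descending.nil
  | append hu hv ihu ihv =>
    rcases List.suffix_append_cases hs with hs | ⟨s', hs', rfl⟩
    · exact ihv hs
    · exact (ihu hs').append hv.descending
  | wrap hm ha hb ihm =>
    rcases List.suffix_cons_iff.1 hs with rfl | hs
    · exact (WellMatched.wrap hm ha hb).descending
    rcases List.suffix_append_cases hs with hs | ⟨s', hs', rfl⟩
    · rcases List.suffix_cons_iff.1 hs with rfl | hs
      · exact Descending.ret_cons hb Descending.nil
      · rw [List.suffix_nil.1 hs]; exact Descending.nil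
    · exact (ihm hs').append (Descending.ret_cons hb Descending.nil)

lemma Descending.of_suffix {w s : List α} (h : Descending pa w) (hs : s <:+ w) :
    Descending pa s := by
  refine h.induction (P := fun w => ∀ s, s <:+ w → Descending pa s) ?_ ?_ ?_ s hs
  · intro s hs
    rw [List.suffix_nil.1 hs]
    exact Descending.nil
  · intro u v hu ih s hs
    rcases List.suffix_append_cases hs with hs | ⟨s', hs', rfl⟩
    · exact ih _ hs
    · exact (hu.descending_of_suffix hs').append (ih v (List.suffix_refl v))
  · intro b v hb ih s hs
    rcases List.suffix_cons_iff.1 hs with rfl | hs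
    · exact Descending.ret_cons hb (ih v (List.suffix_refl v))
    · exact ih _ hs

end Words

namespace VPA

variable {α : Type} {pa : α → VPKind} (A : VPA α pa)

lemma run_append (c : List A.Γ × A.Q) (u v : List α) :
    A.run c (u ++ v) = A.run (A.run c u) v :=
  List.foldl_append

lemma run_singleton (c : List A.Γ × A.Q) (a : α) : A.run c [a] = A.step c a := rfl

lemma run_ret {b : α} (hb : pa b = VPKind.ret) (p : A.Q) :
    A.run ([], p) [b] = ([], phiVPA A [b] p) := by
  simp [phiVPA, run_singleton, step, hb]

end VPA

lemma WellMatched.run_eq {α : Type} {pa : α → VPKind} (A : VPA α pa) {w : List α}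
    (h : WellMatched pa w) (st : List A.Γ) (p : A.Q) :
    A.run (st, p) w = (st, phiVPA A w p) := by
  suffices ∃ f : A.Q → A.Q, ∀ st p, A.run (st, p) w = (st, f p) by
    obtain ⟨f, hf⟩ := this
    rw [phiVPA, hf, hf]
  induction h with
  | nil => exact ⟨id, fun _ _ => rfl⟩
  | intern a ha => exact ⟨fun p => A.δi p a, fun st p => by simp [VPA.run, VPA.step, ha]⟩
  | append _ _ ihu ihv =>
    obtain ⟨f, hf⟩ := ihu
    obtain ⟨g, hg⟩ := ihv
    exact ⟨g ∘ f, fun st p => by rw [VPA.run_append, hf, hg]; rfl⟩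
  | @wrap m a b _ ha hb ihm =>
    obtain ⟨f, hf⟩ := ihm
    refine ⟨fun p => A.δr (f (A.δc p a).2) b (some (A.δc p a).1), fun st p => ?_⟩
    rw [← List.singleton_append, VPA.run_append, VPA.run_append]
    simp [VPA.run_singleton, VPA.step, ha, hb, hf]

section Effects

variable {α : Type} {pa : α → VPKind} (A : VPA α pa)

lemma Descending.run_eq {w : List α} (h : Descending pa w) (p : A.Q) :
    A.run ([], p) w = ([], phiVPA A w p) := by
  suffices ∃ f : A.Q → A.Q, ∀ p, A.run ([], p) w = ([], f p) by
    obtain ⟨f, hf⟩ := this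
    rw [phiVPA, hf]
  refine h.induction ⟨id, fun _ => rfl⟩ ?_ ?_
  · rintro u v hu ⟨f, hf⟩
    exact ⟨f ∘ phiVPA A u, fun p => by rw [VPA.run_append, hu.run_eq, hf]; rfl⟩
  · rintro b v hb ⟨f, hf⟩
    exact ⟨f ∘ phiVPA A [b], fun p => by
      rw [← List.singleton_append, VPA.run_append, VPA.run_ret A hb, hf]; rfl⟩

lemma phiVPA_append {u : List α} (hu : Descending pa u) (v : List α) :
    phiVPA A (u ++ v) = phiVPA A v ∘ phiVPA A u := by
  funext p
  rw [phiVPA, VPA.run_append, hu.run_eq]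
  rfl

lemma phiVPA_wrap {m : List α} {a b : α} (ha : pa a = VPKind.call) (hb : pa b = VPKind.ret)
    (hm : WellMatched pa m) (p : A.Q) :
    phiVPA A (a :: (m ++ [b])) p = A.δr (phiVPA A m (A.δc p a).2) b (some (A.δc p a).1) := by
  rw [phiVPA, ← List.singleton_append, VPA.run_append, VPA.run_append]
  simp [VPA.run_singleton, VPA.step, ha, hb, hm.run_eq]

lemma phiVPA_wrap_congr {m m' : List α} {a b : α} (ha : pa a = VPKind.call)
    (hb : pa b = VPKind.ret) (hm : WellMatched pa m) (hm' : WellMatched pa m')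
    (h : phiVPA A m = phiVPA A m') :
    phiVPA A (a :: (m ++ [b])) = phiVPA A (a :: (m' ++ [b])) := by
  funext p
  rw [phiVPA_wrap A ha hb hm, phiVPA_wrap A ha hb hm', h]

end Effects

section SuffixStates

variable {α : Type} {pa : α → VPKind} (A : VPA α pa)
  (rep : List A.Γ × A.Q → List A.Γ × A.Q)

def repState (p : A.Q) : A.Q := (rep ([], p)).2

/-- `ρ` is the effect of the word that follows `w`. -/
def suffixStates (ρ : A.Q → A.Q) (w : List α) : List A.Q :=
  w.tails.dropLast.map fun s => repState A rep (ρ (phiVPA A s A.q₀))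

variable (ρ : A.Q → A.Q)

@[simp]
lemma suffixStates_nil : suffixStates A rep ρ [] = [] := rfl

lemma suffixStates_cons (a : α) (s : List α) :
    suffixStates A rep ρ (a :: s) =
      repState A rep (ρ (phiVPA A (a :: s) A.q₀)) :: suffixStates A rep ρ s := by
  rw [suffixStates, List.tails_cons, List.dropLast_cons_of_ne_nil (by cases s <;> simp),
    List.map_cons, suffixStates]

lemma suffixStates_singleton (a : α) :
    suffixStates A rep ρ [a] = [repState A rep (ρ (phiVPA A [a] A.q₀))] := rfl

lemma suffixStates_eq_nil_iff {w : List α} : suffixStates A rep ρ w = [] ↔ w = [] := by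
  cases w <;> simp [suffixStates_cons]

lemma suffixStates_append {u : List α} (hu : Descending pa u) (v : List α) :
    suffixStates A rep ρ (u ++ v) =
      suffixStates A rep (ρ ∘ phiVPA A v) u ++ suffixStates A rep ρ v := by
  induction u with
  | nil => rfl
  | cons a u ih =>
    rw [List.cons_append, suffixStates_cons, suffixStates_cons,
      ih (hu.of_suffix (List.suffix_cons a u)), ← List.cons_append (as := u), phiVPA_append A hu]
    rfl

lemma suffixStates_tail_append {u : List α} (hu : Descending pa u) (hne : u ≠ []) (v : List α) :
    (suffixStates A rep ρ (u ++ v)).tail =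
      (suffixStates A rep (ρ ∘ phiVPA A v) u).tail ++ suffixStates A rep ρ v := by
  rw [suffixStates_append A rep ρ hu,
    List.tail_append_of_ne_nil ((suffixStates_eq_nil_iff A rep _).not.2 hne)]

lemma suffixStates_wrap {m : List α} (a b : α) (hm : WellMatched pa m) :
    suffixStates A rep ρ (a :: (m ++ [b])) =
      repState A rep (ρ (phiVPA A (a :: (m ++ [b])) A.q₀)) ::
        (suffixStates A rep (ρ ∘ phiVPA A [b]) m ++
          [repState A rep (ρ (phiVPA A [b] A.q₀))]) := by
  rw [suffixStates_cons, suffixStates_append A rep ρ hm.descending, suffixStates_singleton]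

lemma sigma0_eq_suffixStates {w : List α} (hw : Descending pa w) :
    sigma0 A rep w = suffixStates A rep id w := by
  refine List.map_congr_left fun s hs => ?_
  have hs : Descending pa s :=
    hw.of_suffix ((List.mem_tails s w).1 (List.dropLast_subset _ hs))
  rw [nuA, hs.run_eq]
  rfl

lemma sigma1_eq_suffixStates {w : List α} (hw : WellMatched pa w) :
    sigma1 A rep w = .inl (phiVPA A w) :: (suffixStates A rep id w).tail.map .inr := by
  rw [sigma1, sigma0_eq_suffixStates A rep hw.descending]

end SuffixStates

instance VPA.instFiniteQ {α : Type} {pa : α → VPKind} (A : VPA α pa) : Finite A.Q :=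
  @Finite.of_fintype _ A.finQ

namespace SuffixGrammar

/-- In `wellMatched τ ρ` and its siblings, `τ` is the effect of the generated word and `ρ` the
effect of the word that follows it. -/
inductive Nonterminal (E : Type)
  | start
  | wellMatched (τ ρ : E)
  | wellMatchedTail (τ ρ : E)
  | descending (τ ρ : E)
  deriving Fintype

instance {E : Type} [Finite E] : Finite (Nonterminal E) := by
  have := Fintype.ofFinite E
  infer_instance

variable {α : Type} {pa : α → VPKind} (A : VPA α pa)
  (rep : List A.Γ × A.Q → List A.Γ × A.Q)
  {T : Type} (ι : A.Q → T)

abbrev NT := Nonterminal (A.Q → A.Q)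

inductive WellMatchedRule : ContextFreeRule T (NT A) → Prop
  | nil (ρ : A.Q → A.Q) : WellMatchedRule ⟨.wellMatched id ρ, []⟩
  | append (τ₁ τ₂ ρ : A.Q → A.Q) :
      WellMatchedRule ⟨.wellMatched (τ₂ ∘ τ₁) ρ,
        [.nonterminal (.wellMatched τ₁ (ρ ∘ τ₂)), .nonterminal (.wellMatched τ₂ ρ)]⟩
  | intern (ρ : A.Q → A.Q) {c : α} : pa c = .intern →
      WellMatchedRule ⟨.wellMatched (phiVPA A [c]) ρ,
        [.terminal (ι (repState A rep (ρ (phiVPA A [c] A.q₀))))]⟩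
  | wrap (ρ : A.Q → A.Q) {a b : α} {m : List α} :
      pa a = .call → pa b = .ret → WellMatched pa m →
      WellMatchedRule ⟨.wellMatched (phiVPA A (a :: (m ++ [b]))) ρ,
        [.terminal (ι (repState A rep (ρ (phiVPA A (a :: (m ++ [b])) A.q₀)))),
         .nonterminal (.wellMatched (phiVPA A m) (ρ ∘ phiVPA A [b])),
         .terminal (ι (repState A rep (ρ (phiVPA A [b] A.q₀))))]⟩

inductive TailRule : ContextFreeRule T (NT A) → Prop
  | intern (ρ : A.Q → A.Q) {c : α} : pa c = .intern →
      TailRule ⟨.wellMatchedTail (phiVPA A [c]) ρ, []⟩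
  | append (τ₁ τ₂ ρ : A.Q → A.Q) :
      TailRule ⟨.wellMatchedTail (τ₂ ∘ τ₁) ρ,
        [.nonterminal (.wellMatchedTail τ₁ (ρ ∘ τ₂)),
         .nonterminal (.wellMatched τ₂ ρ)]⟩
  | wrap (ρ : A.Q → A.Q) {a b : α} {m : List α} :
      pa a = .call → pa b = .ret → WellMatched pa m →
      TailRule ⟨.wellMatchedTail (phiVPA A (a :: (m ++ [b]))) ρ,
        [.nonterminal (.wellMatched (phiVPA A m) (ρ ∘ phiVPA A [b])),
         .terminal (ι (repState A rep (ρ (phiVPA A [b] A.q₀))))]⟩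

inductive DescendingRule : ContextFreeRule T (NT A) → Prop
  | nil (ρ : A.Q → A.Q) : DescendingRule ⟨.descending id ρ, []⟩
  | wellMatched_append (τ₁ τ₂ ρ : A.Q → A.Q) :
      DescendingRule ⟨.descending (τ₂ ∘ τ₁) ρ,
        [.nonterminal (.wellMatched τ₁ (ρ ∘ τ₂)), .nonterminal (.descending τ₂ ρ)]⟩
  | ret_cons (τ ρ : A.Q → A.Q) {b : α} : pa b = .ret →
      DescendingRule ⟨.descending (τ ∘ phiVPA A [b]) ρ,
        [.terminal (ι (repState A rep (ρ (τ (phiVPA A [b] A.q₀))))),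
         .nonterminal (.descending τ ρ)]⟩

/-- `ι` embeds the states into the terminal alphabet and `starts` lists the right-hand sides of
the start symbol; `σ₀` and `σ₁` differ only in these two parameters. -/
inductive Rule (starts : Set (List (Symbol T (NT A)))) : ContextFreeRule T (NT A) → Prop
  | start (u : List (Symbol T (NT A))) : u ∈ starts → Rule starts ⟨.start, u⟩
  | ofWellMatched {r : ContextFreeRule T (NT A)} : WellMatchedRule A rep ι r → Rule starts r
  | ofTail {r : ContextFreeRule T (NT A)} : TailRule A rep ι r → Rule starts r
  | ofDescending {r : ContextFreeRule T (NT A)} : DescendingRule A rep ι r → Rule starts r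

noncomputable def grammar [Finite T] (starts : Set (List (Symbol T (NT A)))) :
    ContextFreeGrammar T :=
  ContextFreeGrammar.ofBoundedRules .start 3 (Rule A rep ι starts)

def targetLanguage (L : Language T) : NT A → Language T
  | .start => L
  | .wellMatched τ ρ =>
      {x | ∃ w, WellMatched pa w ∧ phiVPA A w = τ ∧ (suffixStates A rep ρ w).map ι = x}
  | .wellMatchedTail τ ρ =>
      {x | ∃ w, WellMatched pa w ∧ w ≠ [] ∧ phiVPA A w = τ ∧
        (suffixStates A rep ρ w).tail.map ι = x}
  | .descending τ ρ =>
      {x | ∃ w, Descending pa w ∧ phiVPA A w = τ ∧ (suffixStates A rep ρ w).map ι = x}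

open ContextFreeGrammar

variable {A rep ι} {starts : Set (List (Symbol T (NT A)))} {L : Language T}
  {r : ContextFreeRule T (NT A)}

lemma WellMatchedRule.sententialLanguage_le (hr : WellMatchedRule A rep ι r) :
    sententialLanguage (targetLanguage A rep ι L) r.output ≤
      targetLanguage A rep ι L r.input := by
  intro x hx
  cases hr with
  | nil ρ =>
    subst hx
    exact ⟨[], .nil, rfl, rfl⟩
  | intern ρ hc =>
    obtain ⟨_, rfl, _, rfl, rfl⟩ := hx
    exact ⟨_, .intern _ hc, rfl, rfl⟩
  | append τ₁ τ₂ ρ =>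
    simp only [sententialLanguage_cons, sententialLanguage_nil, symbolLanguage, mul_one] at hx
    obtain ⟨_, ⟨u, hu, rfl, rfl⟩, _, ⟨v, hv, rfl, rfl⟩, rfl⟩ := hx
    refine ⟨u ++ v, hu.append hv, phiVPA_append A hu.descending v, ?_⟩
    rw [suffixStates_append A rep ρ hu.descending, List.map_append]
  | wrap ρ ha hb hm =>
    simp only [sententialLanguage_cons, sententialLanguage_nil, symbolLanguage, mul_one] at hx
    obtain ⟨_, rfl, _, ⟨_, ⟨m', hm', hφ, rfl⟩, _, rfl, rfl⟩, rfl⟩ := hx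
    refine ⟨_, .wrap hm' ha hb, phiVPA_wrap_congr A ha hb hm' hm hφ, ?_⟩
    rw [suffixStates_wrap A rep ρ _ _ hm', phiVPA_wrap_congr A ha hb hm' hm hφ]
    simp

lemma TailRule.sententialLanguage_le (hr : TailRule A rep ι r) :
    sententialLanguage (targetLanguage A rep ι L) r.output ≤
      targetLanguage A rep ι L r.input := by
  intro x hx
  cases hr with
  | intern ρ hc =>
    subst hx
    exact ⟨_, .intern _ hc, List.cons_ne_nil _ _, rfl, rfl⟩
  | append τ₁ τ₂ ρ =>
    simp only [sententialLanguage_cons, sententialLanguage_nil, symbolLanguage, mul_one] at hx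
    obtain ⟨_, ⟨u, hu, hne, rfl, rfl⟩, _, ⟨v, hv, rfl, rfl⟩, rfl⟩ := hx
    refine ⟨u ++ v, hu.append hv, by simp [hne], phiVPA_append A hu.descending v, ?_⟩
    rw [suffixStates_tail_append A rep ρ hu.descending hne, List.map_append]
  | wrap ρ ha hb hm =>
    simp only [sententialLanguage_cons, sententialLanguage_nil, symbolLanguage, mul_one] at hx
    obtain ⟨_, ⟨m', hm', hφ, rfl⟩, _, rfl, rfl⟩ := hx
    refine ⟨_, .wrap hm' ha hb, List.cons_ne_nil _ _, phiVPA_wrap_congr A ha hb hm' hm hφ, ?_⟩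
    rw [suffixStates_wrap A rep ρ _ _ hm']
    simp

lemma DescendingRule.sententialLanguage_le (hr : DescendingRule A rep ι r) :
    sententialLanguage (targetLanguage A rep ι L) r.output ≤
      targetLanguage A rep ι L r.input := by
  intro x hx
  cases hr with
  | nil ρ =>
    subst hx
    exact ⟨[], .nil, rfl, rfl⟩
  | wellMatched_append τ₁ τ₂ ρ =>
    simp only [sententialLanguage_cons, sententialLanguage_nil, symbolLanguage, mul_one] at hx
    obtain ⟨_, ⟨u, hu, rfl, rfl⟩, _, ⟨v, hv, rfl, rfl⟩, rfl⟩ := hx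
    refine ⟨u ++ v, hu.descending.append hv, phiVPA_append A hu.descending v, ?_⟩
    rw [suffixStates_append A rep ρ hu.descending, List.map_append]
  | @ret_cons τ ρ b hb =>
    simp only [sententialLanguage_cons, sententialLanguage_nil, symbolLanguage, mul_one] at hx
    obtain ⟨_, rfl, _, ⟨v, hv, rfl, rfl⟩, rfl⟩ := hx
    have hφ := phiVPA_append A (Descending.ret_cons hb .nil) v
    refine ⟨b :: v, Descending.ret_cons hb hv, hφ, ?_⟩
    rw [suffixStates_cons, List.map_cons, ← List.singleton_append (l := v), hφ]
    rfl

variable [Finite T]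

theorem language_grammar
    (hL : ∀ u ∈ starts, sententialLanguage (targetLanguage A rep ι L) u ≤ L)
    (hcomplete : ∀ x ∈ L,
      (grammar A rep ι starts).Derives [.nonterminal .start] (x.map Symbol.terminal)) :
    (grammar A rep ι starts).language = L := by
  refine language_eq_of_rules_le (g := grammar A rep ι starts) (targetLanguage A rep ι L)
    (fun r hr => ?_) hcomplete
  cases (mem_ofBoundedRules_rules.1 hr).2 with
  | start u hu => exact hL u hu
  | ofWellMatched hr => exact hr.sententialLanguage_le
  | ofTail hr => exact hr.sententialLanguage_le
  | ofDescending hr => exact hr.sententialLanguage_le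

lemma produces_of_rule (hr : Rule A rep ι starts r) (hk : r.output.length ≤ 3) :
    (grammar A rep ι starts).Produces [.nonterminal r.input] r.output :=
  produces_ofBoundedRules hk hr

lemma derives_wellMatched {m : List α} (hm : WellMatched pa m) (ρ : A.Q → A.Q) :
    (grammar A rep ι starts).Derives [.nonterminal (Nonterminal.wellMatched (phiVPA A m) ρ)]
      (((suffixStates A rep ρ m).map ι).map Symbol.terminal) := by
  induction hm generalizing ρ with
  | nil => exact (produces_of_rule (.ofWellMatched (.nil ρ)) (by simp)).single
  | intern c hc => exact (produces_of_rule (.ofWellMatched (.intern ρ hc)) (by simp)).single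
  | @append u v hu _ ihu ihv =>
    rw [phiVPA_append A hu.descending, suffixStates_append A rep ρ hu.descending, List.map_append,
      List.map_append]
    exact (produces_of_rule (.ofWellMatched (.append _ _ ρ)) (by simp)).trans_derives
      (((ihu _).append_right _).trans ((ihv ρ).append_left _))
  | wrap hm ha hb ihm =>
    simp only [suffixStates_wrap A rep ρ _ _ hm, List.map_cons, List.map_append, List.map_nil]
    exact (produces_of_rule (.ofWellMatched (.wrap ρ ha hb hm)) (by simp)).trans_derives
      (((ihm _).append_right _).append_left [.terminal _])

lemma derives_wellMatchedTail {m : List α} (hm : WellMatched pa m) (hne : m ≠ [])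
    (ρ : A.Q → A.Q) :
    (grammar A rep ι starts).Derives [.nonterminal (Nonterminal.wellMatchedTail (phiVPA A m) ρ)]
      (((suffixStates A rep ρ m).tail.map ι).map Symbol.terminal) := by
  induction hm generalizing ρ with
  | nil => exact absurd rfl hne
  | intern c hc => exact (produces_of_rule (.ofTail (.intern ρ hc)) (by simp)).single
  | @append u v hu hv ihu ihv =>
    by_cases hu0 : u = []
    · subst hu0
      exact ihv hne ρ
    rw [phiVPA_append A hu.descending, suffixStates_tail_append A rep ρ hu.descending hu0,
      List.map_append, List.map_append]
    exact (produces_of_rule (.ofTail (.append _ _ ρ)) (by simp)).trans_derives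
      (((ihu hu0 _).append_right _).trans ((derives_wellMatched hv ρ).append_left _))
  | wrap hm ha hb _ =>
    simp only [suffixStates_wrap A rep ρ _ _ hm, List.tail_cons, List.map_append, List.map_cons,
      List.map_nil]
    exact (produces_of_rule (.ofTail (.wrap ρ ha hb hm)) (by simp)).trans_derives
      ((derives_wellMatched hm _).append_right _)

lemma derives_descending {w : List α} (hw : Descending pa w) (ρ : A.Q → A.Q) :
    (grammar A rep ι starts).Derives [.nonterminal (Nonterminal.descending (phiVPA A w) ρ)]
      (((suffixStates A rep ρ w).map ι).map Symbol.terminal) := by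
  refine hw.induction (P := fun w => ∀ ρ, (grammar A rep ι starts).Derives
    [.nonterminal (Nonterminal.descending (phiVPA A w) ρ)]
    (((suffixStates A rep ρ w).map ι).map Symbol.terminal)) ?_ ?_ ?_ ρ
  · exact fun ρ => (produces_of_rule (.ofDescending (.nil ρ)) (by simp)).single
  · intro u v hu ih ρ
    rw [phiVPA_append A hu.descending, suffixStates_append A rep ρ hu.descending,
      List.map_append, List.map_append]
    exact (produces_of_rule (.ofDescending (.wellMatched_append _ _ ρ)) (by simp)).trans_derives
      (((derives_wellMatched hu _).append_right _).trans ((ih ρ).append_left _))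
  · intro b v hb ih ρ
    have hφ : phiVPA A (b :: v) = phiVPA A v ∘ phiVPA A [b] :=
      phiVPA_append A (Descending.ret_cons hb .nil) v
    rw [suffixStates_cons, hφ]
    exact (produces_of_rule (.ofDescending (.ret_cons _ ρ hb)) (by simp)).trans_derives
      ((ih ρ).append_left [.terminal _])

end SuffixGrammar

open ContextFreeGrammar SuffixGrammar

variable {α : Type} {pa : α → VPKind}

theorem isContextFree_sigma0_image (A : VPA α pa) (rep : List A.Γ × A.Q → List A.Γ × A.Q) :
    Language.IsContextFree
      ((sigma0 A rep '' {w | Descending pa w} : Set (List A.Q)) : Language A.Q) := by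
  let starts : Set (List (Symbol A.Q (NT A))) :=
    Set.range fun τ => [.nonterminal (.descending τ id)]
  refine ⟨grammar A rep id starts, language_grammar ?_ ?_⟩
  · rintro _ ⟨τ, rfl⟩ x hx
    simp only [sententialLanguage_cons, sententialLanguage_nil, symbolLanguage, mul_one] at hx
    obtain ⟨w, hw, -, rfl⟩ := hx
    exact ⟨w, hw, by rw [sigma0_eq_suffixStates A rep hw, List.map_id]⟩
  · rintro _ ⟨w, hw, rfl⟩
    have hstart : Rule A rep id starts ⟨.start, [.nonterminal (.descending (phiVPA A w) id)]⟩ :=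
      .start _ ⟨_, rfl⟩
    have := (produces_of_rule hstart (by simp)).trans_derives (derives_descending hw id)
    rwa [List.map_id, ← sigma0_eq_suffixStates A rep hw] at this

theorem isContextFree_sigma1_image (A : VPA α pa) (rep : List A.Γ × A.Q → List A.Γ × A.Q) :
    Language.IsContextFree ((sigma1 A rep '' {w | WellMatched pa w ∧ w ≠ []} :
      Set (List ((A.Q → A.Q) ⊕ A.Q))) : Language ((A.Q → A.Q) ⊕ A.Q)) := by
  let starts : Set (List (Symbol ((A.Q → A.Q) ⊕ A.Q) (NT A))) :=
    Set.range fun τ => [.terminal (.inl τ), .nonterminal (.wellMatchedTail τ id)]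
  refine ⟨grammar A rep .inr starts, language_grammar ?_ ?_⟩
  · rintro _ ⟨τ, rfl⟩ x hx
    simp only [sententialLanguage_cons, sententialLanguage_nil, symbolLanguage, mul_one] at hx
    obtain ⟨_, rfl, _, ⟨w, hw, hne, rfl, rfl⟩, rfl⟩ := hx
    exact ⟨w, ⟨hw, hne⟩, sigma1_eq_suffixStates A rep hw⟩
  · rintro _ ⟨w, ⟨hw, hne⟩, rfl⟩
    have hstart : Rule A rep .inr starts
        ⟨.start, [.terminal (.inl (phiVPA A w)),
          .nonterminal (.wellMatchedTail (phiVPA A w) id)]⟩ :=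
      .start _ ⟨_, rfl⟩
    rw [sigma1_eq_suffixStates A rep hw]
    exact (produces_of_rule hstart (by simp)).trans_derives
      ((derives_wellMatchedTail hw hne id).append_left [.terminal (Sum.inl (phiVPA A w))])

theorem statement18_general {α : Type} {pa : α → VPKind} (A : VPA α pa)
    (rep : List A.Γ × A.Q → List A.Γ × A.Q) :
    Language.IsContextFree ((sigma0 A rep '' {w | Descending pa w} : Set (List A.Q)) : Language A.Q) ∧
    Language.IsContextFree ((sigma1 A rep '' {w | WellMatched pa w ∧ w ≠ []} :
      Set (List ((A.Q → A.Q) ⊕ A.Q))) : Language ((A.Q → A.Q) ⊕ A.Q)) :=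
  ⟨isContextFree_sigma0_image A rep, isContextFree_sigma1_image A rep⟩

/-- with `ν_A, σ₀, σ₁` defined via length-lexicographically
minimal representative configurations, the languages `S₀ = σ₀(D)` and
`S₁ = σ₁(W∖{ε})` are context-free. -/
theorem statement18 {α : Type} [Fintype α] {pa : α → VPKind} (A : VPA α pa)
    (ltQ : LinearOrder A.Q) (ltΓ : LinearOrder A.Γ)
    (rep : List A.Γ × A.Q → List A.Γ × A.Q)
    (hrep : IsRepFun A ltQ ltΓ rep) :
    Language.IsContextFree ((sigma0 A rep '' {w | Descending pa w} : Set (List A.Q)) : Language A.Q) ∧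
    Language.IsContextFree ((sigma1 A rep '' {w | WellMatched pa w ∧ w ≠ []} :
      Set (List ((A.Q → A.Q) ⊕ A.Q))) : Language ((A.Q → A.Q) ⊕ A.Q)) :=
  statement18_general A rep
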